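/- Let (X, d) be a proper, uniquely geodesic, straight metric space, b ∈ X, and let α : [0,∞) → X be any geodesic ray, not necessarily based at b. Then α(t) converges in the visual compactification X̄_b as t → ∞; equivalently, d(b, α(t)) → ∞ as t → ∞, and the unique geodesic rays based at b passing through α(t) converge in D_b (uniformly on compact sets) as t → ∞. -/

import Mathlib

/-!
Let `β x = lim (d(x, α t) - t)` be the Busemann function of `α`; it is `1`-Lipschitz. By
properness, the lines through `b` and `α t` have pointwise cluster points as `t → ∞`, and each
of them is a line `h` through `b` along which `β` decreases at unit speed: `β (h s) = β b - s`.
For two such lines `h, h'` this forces `d(h v, h' w) = w - v` whenever `v ≤ 0 ≤ w`, so `h` on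
`(-∞, 0]` followed by `h'` on `[0, ∞)` is again a line, and straightness gives `h = h'`. Hence the
lines converge pointwise, and, being `1`-Lipschitz, uniformly on compact sets. Finally, unique
geodesics and straightness make every ray from `b` through `α t` the restriction of that line.
-/

open Filter Topology
open scoped NNReal ENNReal

variable {X : Type*} [MetricSpace X]

/-- `γ` restricted to the set `s ⊆ ℝ` is a (unit-speed) geodesic:
`dist (γ u) (γ v) = |u - v|` for all `u, v ∈ s`. -/
def IsGeodesicOn (γ : ℝ → X) (s : Set ℝ) : Prop :=
  ∀ u ∈ s, ∀ v ∈ s, dist (γ u) (γ v) = |u - v|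

/-- `X` is uniquely geodesic: any two distinct points are joined by a geodesic
parametrized on `[0, dist a c]`, and any two such geodesics agree on that interval. -/
def UniquelyGeodesic (X : Type*) [MetricSpace X] : Prop :=
  ∀ a c : X, a ≠ c →
    ∃ γ : ℝ → X,
      (IsGeodesicOn γ (Set.Icc 0 (dist a c)) ∧ γ 0 = a ∧ γ (dist a c) = c) ∧
        ∀ γ' : ℝ → X,
          (IsGeodesicOn γ' (Set.Icc 0 (dist a c)) ∧ γ' 0 = a ∧ γ' (dist a c) = c) →
            Set.EqOn γ' γ (Set.Icc 0 (dist a c))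

/-- `X` is straight: every geodesic defined on a nondegenerate closed interval extends to a
unique bi-infinite geodesic (an isometric embedding of `ℝ`). -/
def Straight (X : Type*) [MetricSpace X] : Prop :=
  ∀ (γ : ℝ → X) (a c : ℝ), a < c → IsGeodesicOn γ (Set.Icc a c) →
    ∃! γ' : ℝ → X, Isometry γ' ∧ Set.EqOn γ' γ (Set.Icc a c)

/-- The space `D_b` of geodesic rays based at `b`, as a subspace of `C(ℝ≥0, X)`
(with the compact-open topology, i.e. uniform convergence on compact sets). -/
abbrev GeodesicRay (X : Type*) [MetricSpace X] (b : X) :=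
  {γ : C(ℝ≥0, X) // Isometry ⇑γ ∧ γ 0 = b}

/-- The horofunction embedding `h : X → C(X, ℝ)`, `h x y = d(x, y) - d(x, b)`. -/
noncomputable def horo (b x : X) : C(X, ℝ) :=
  ⟨fun y => dist x y - dist x b,
    (continuous_const.dist continuous_id).sub continuous_const⟩

/-- The horoboundary of `X` (with basepoint `b`): the closure of `h(X)` in `C(X, ℝ)`
minus `h(X)`. -/
def horoboundary (b : X) : Set C(X, ℝ) :=
  closure (Set.range (horo b)) \ Set.range (horo b)

/-- The setoid on `D_b × M` identifying all points whose second coordinate is `0`. -/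
def collapseSetoid (X : Type*) [MetricSpace X] (b : X) (M : Type*) [Zero M] :
    Setoid (GeodesicRay X b × M) where
  r p q := p = q ∨ (p.2 = 0 ∧ q.2 = 0)
  iseqv := by
    refine ⟨fun _ => Or.inl rfl, ?_, ?_⟩
    · rintro p q (rfl | ⟨h1, h2⟩)
      · exact Or.inl rfl
      · exact Or.inr ⟨h2, h1⟩
    · rintro p q r (rfl | ⟨h1, h2⟩) (rfl | ⟨h3, h4⟩)
      · exact Or.inl rfl
      · exact Or.inr ⟨h3, h4⟩
      · exact Or.inr ⟨h1, h2⟩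
      · exact Or.inr ⟨h1, h4⟩

/-- The visual compactification `X̄_b = (D_b × [0, ∞]) / (D_b × {0})`. -/
abbrev VisualCompactification (X : Type*) [MetricSpace X] (b : X) :=
  Quotient (collapseSetoid X b ℝ≥0∞)

/-- `X` is C¹ along geodesics: for a bi-infinite geodesic `γ` and a point `p` off `γ`,
`t ↦ d(γ t, p)` is differentiable, and the derivative depends continuously on `(t, p)`. -/
def C1AlongGeodesics (X : Type*) [MetricSpace X] : Prop :=
  ∀ γ : ℝ → X, Isometry γ →
    (∀ p, p ∉ Set.range γ → ∀ t : ℝ, DifferentiableAt ℝ (fun s => dist (γ s) p) t) ∧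
      ContinuousOn (fun q : ℝ × X => deriv (fun s => dist (γ s) q.2) q.1)
        {q : ℝ × X | q.2 ∉ Set.range γ}

/-- `X` has constant distance variation: for distinct bi-infinite geodesics `γ, η` with
`γ 0 = η 0`, either `(d/dt) d(γ t, η s)|_{t=0}` exists for all `s > 0` and is independent
of `s`, or it exists for no `s > 0`. -/
def ConstantDistanceVariation (X : Type*) [MetricSpace X] : Prop :=
  ∀ γ η : ℝ → X, Isometry γ → Isometry η → γ 0 = η 0 → γ ≠ η →
    ((∀ s : ℝ, 0 < s → DifferentiableAt ℝ (fun t => dist (γ t) (η s)) 0) ∧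
        ∀ s s' : ℝ, 0 < s → 0 < s' →
          deriv (fun t => dist (γ t) (η s)) 0 = deriv (fun t => dist (γ t) (η s')) 0) ∨
      ∀ s : ℝ, 0 < s → ¬ DifferentiableAt ℝ (fun t => dist (γ t) (η s)) 0

open Set

theorem Isometry.isGeodesicOn {g : ℝ → X} (hg : Isometry g) (s : Set ℝ) : IsGeodesicOn g s :=
  fun u _ v _ => by rw [hg.dist_eq, Real.dist_eq]

theorem Isometry.dist_eq_sub_of_le {α : ℝ≥0 → X} (hα : Isometry α) {s t : ℝ≥0} (hst : s ≤ t) :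
    dist (α s) (α t) = t - s := by
  rw [hα.dist_eq, NNReal.dist_eq, abs_sub_comm,
    abs_of_nonneg (sub_nonneg.2 (NNReal.coe_le_coe.2 hst))]

theorem Isometry.dist_map_zero {α : ℝ≥0 → X} (hα : Isometry α) (t : ℝ≥0) :
    dist (α 0) (α t) = t := by
  rw [hα.dist_eq_sub_of_le (zero_le : 0 ≤ t), NNReal.coe_zero, sub_zero]

theorem Equicontinuous.tendsto_continuousMap_of_tendsto_pi {ι Y Z : Type*} [TopologicalSpace Y]
    [UniformSpace Z] {l : Filter ι} {F : ι → C(Y, Z)} {f : C(Y, Z)}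
    (hF : Equicontinuous fun i => ⇑(F i)) (h : Tendsto (fun i => ⇑(F i)) l (𝓝 ⇑f)) :
    Tendsto F l (𝓝 f) := by
  rw [ContinuousMap.isUniformEmbedding_toUniformOnFunIsCompact.isInducing.tendsto_nhds_iff]
  exact (EquicontinuousOn.tendsto_uniformOnFun_iff_pi (fun _ hK => hK)
    (sUnion_eq_univ_iff.2 fun y => ⟨{y}, isCompact_singleton, rfl⟩)
    (fun K _ => hF.equicontinuousOn K) l f).2 h

def IsLineThrough (g : ℝ → X) (x y : X) : Prop :=
  Isometry g ∧ g 0 = x ∧ g (dist x y) = y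

namespace Straight

theorem eq_of_eqOn_Icc (hS : Straight X) {g g' : ℝ → X} (hg : Isometry g) (hg' : Isometry g')
    {a c : ℝ} (hac : a < c) (h : EqOn g g' (Icc a c)) : g = g' :=
  (hS g' a c hac (hg'.isGeodesicOn _)).unique ⟨hg, h⟩ ⟨hg', eqOn_refl _ _⟩

theorem exists_isLineThrough (hS : Straight X) (hU : UniquelyGeodesic X) {x y : X}
    (hxy : x ≠ y) : ∃ g : ℝ → X, IsLineThrough g x y := by
  obtain ⟨γ, ⟨hγ, hγ0, hγd⟩, -⟩ := hU x y hxy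
  have hd : 0 < dist x y := dist_pos.2 hxy
  obtain ⟨g, ⟨hg, hgγ⟩, -⟩ := hS γ 0 (dist x y) hd hγ
  exact ⟨g, hg, (hgγ ⟨le_rfl, hd.le⟩).trans hγ0, (hgγ ⟨hd.le, le_rfl⟩).trans hγd⟩

theorem exists_line_extending_ray (hS : Straight X) {r : ℝ≥0 → X} (hr : Isometry r) :
    ∃ g : ℝ → X, Isometry g ∧ ∀ s : ℝ≥0, g s = r s := by
  set f : ℝ → X := fun s => r s.toNNReal
  have hf : ∀ c, IsGeodesicOn f (Icc 0 c) := fun c u hu v hv => by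
    rw [hr.dist_eq, NNReal.dist_eq, Real.coe_toNNReal _ hu.1, Real.coe_toNNReal _ hv.1]
  obtain ⟨g, ⟨hg, hgf⟩, -⟩ := hS f 0 1 one_pos (hf 1)
  refine ⟨g, hg, fun s => ?_⟩
  have hc : (0 : ℝ) < max 1 (s : ℝ) := lt_max_of_lt_left one_pos
  obtain ⟨g', ⟨hg', hg'f⟩, -⟩ := hS f 0 (max 1 (s : ℝ)) hc (hf _)
  have hgg' : g = g' := eq_of_eqOn_Icc hS hg hg' one_pos fun v hv =>
    (hgf hv).trans (hg'f ⟨hv.1, hv.2.trans (le_max_left _ _)⟩).symm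
  rw [hgg', hg'f ⟨s.coe_nonneg, le_max_right _ _⟩]
  simp [f]

theorem ray_eq_line_of_mem_range (hS : Straight X) (hU : UniquelyGeodesic X) {b p : X}
    (hp : p ≠ b) {r : ℝ≥0 → X} (hr : Isometry r) (hr0 : r 0 = b) (hpr : p ∈ range r)
    {g : ℝ → X} (hg : IsLineThrough g b p) (s : ℝ≥0) : r s = g s := by
  obtain ⟨hg, hg0, hgp⟩ := hg
  obtain ⟨g', hg', hg'r⟩ := exists_line_extending_ray hS hr
  obtain ⟨u, rfl⟩ := hpr
  have hu : dist b (r u) = u := by rw [← hr0, hr.dist_map_zero]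
  have hg'0 : g' 0 = b := by simpa [hr0] using hg'r 0
  have hd : 0 < dist b (r u) := dist_pos.2 hp.symm
  obtain ⟨γ, -, hγ⟩ := hU b (r u) hp.symm
  have hgg' : g' = g := eq_of_eqOn_Icc hS hg' hg hd fun v hv =>
    (hγ g' ⟨hg'.isGeodesicOn _, hg'0, by rw [hu, hg'r]⟩ hv).trans
      (hγ g ⟨hg.isGeodesicOn _, hg0, hgp⟩ hv).symm
  rw [← hg'r, hgg']

end Straight

section Busemann

variable {α : ℝ≥0 → X} {b : X}

noncomputable def busemann (α : ℝ≥0 → X) (x : X) : ℝ :=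
  ⨅ t : ℝ≥0, (dist x (α t) - t)

theorem antitone_dist_sub (hα : Isometry α) (x : X) :
    Antitone fun t : ℝ≥0 => dist x (α t) - t := by
  intro s t hst
  have := dist_triangle x (α s) (α t)
  rw [hα.dist_eq_sub_of_le hst] at this
  simp only
  linarith

theorem bddBelow_range_dist_sub (hα : Isometry α) (x : X) :
    BddBelow (range fun t : ℝ≥0 => dist x (α t) - t) := by
  refine ⟨-dist (α 0) x, ?_⟩
  rintro _ ⟨t, rfl⟩
  have := dist_triangle (α 0) x (α t)
  rw [hα.dist_map_zero] at this
  simp only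
  linarith

theorem busemann_le (hα : Isometry α) (x : X) (t : ℝ≥0) : busemann α x ≤ dist x (α t) - t :=
  ciInf_le (bddBelow_range_dist_sub hα x) t

theorem le_busemann {x : X} {a : ℝ} (h : ∀ t : ℝ≥0, a ≤ dist x (α t) - t) : a ≤ busemann α x :=
  le_ciInf h

theorem busemann_le_add_dist (hα : Isometry α) (x y : X) :
    busemann α x ≤ busemann α y + dist x y := by
  have : busemann α x - dist x y ≤ busemann α y := le_busemann fun t => by
    linarith [busemann_le hα x t, dist_triangle x y (α t)]
  linarith

theorem lipschitzWith_busemann (hα : Isometry α) : LipschitzWith 1 (busemann α) :=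
  LipschitzWith.of_le_add (busemann_le_add_dist hα)

theorem tendsto_dist_atTop (hα : Isometry α) (b : X) :
    Tendsto (fun t : ℝ≥0 => dist b (α t)) atTop atTop := by
  refine tendsto_atTop_mono (fun t => ?_) <|
    tendsto_atTop_add_const_right _ (-dist (α 0) b) (NNReal.tendsto_coe_atTop.2 tendsto_id)
  have := dist_triangle (α 0) b (α t)
  rw [hα.dist_map_zero] at this
  simp only [id]
  linarith

def IsBusemannLine (α : ℝ≥0 → X) (b : X) (h : ℝ → X) : Prop :=
  Isometry h ∧ h 0 = b ∧ ∀ s, busemann α (h s) = busemann α b - s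

theorem IsBusemannLine.dist_eq (hα : Isometry α) {h h' : ℝ → X} (hh : IsBusemannLine α b h)
    (hh' : IsBusemannLine α b h') {v w : ℝ} (hv : v ≤ 0) (hw : 0 ≤ w) :
    dist (h v) (h' w) = w - v := by
  obtain ⟨hh, hh0, hhβ⟩ := hh
  obtain ⟨hh', hh'0, hh'β⟩ := hh'
  have hvb : dist (h v) b = -v := by
    rw [← hh0, hh.dist_eq, Real.dist_eq, sub_zero, abs_of_nonpos hv]
  have hbw : dist b (h' w) = w := by
    rw [← hh'0, hh'.dist_eq, Real.dist_eq, zero_sub, abs_neg, abs_of_nonneg hw]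
  have hle := dist_triangle (h v) b (h' w)
  have hge := busemann_le_add_dist hα (h v) (h' w)
  rw [hhβ, hh'β] at hge
  linarith

theorem IsBusemannLine.eq (hS : Straight X) (hα : Isometry α) {h h' : ℝ → X}
    (hh : IsBusemannLine α b h) (hh' : IsBusemannLine α b h') : h = h' := by
  set κ : ℝ → X := fun v => if v ≤ 0 then h v else h' v
  have hκ : Isometry κ := Isometry.of_dist_eq fun v w => by
    simp only [κ, Real.dist_eq]
    split_ifs with hv hw hw
    · exact hh.1.dist_eq v w
    · rw [hh.dist_eq hα hh' hv (not_le.1 hw).le, abs_of_neg (by linarith [not_le.1 hw]),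
        neg_sub]
    · rw [dist_comm, hh.dist_eq hα hh' hw (not_le.1 hv).le,
        abs_of_pos (by linarith [not_le.1 hv])]
    · exact hh'.1.dist_eq v w
  have hκh : κ = h := hS.eq_of_eqOn_Icc hκ hh.1 neg_one_lt_zero fun v hv => if_pos hv.2
  have hκh' : κ = h' := hS.eq_of_eqOn_Icc hκ hh'.1 one_pos fun v hv => by
    simp only [κ]
    split_ifs with hv0
    · rw [le_antisymm hv0 hv.1, hh.2.1, hh'.2.1]
    · rfl
  rw [← hκh, hκh']

section ClusterPoints

variable {F : ℝ≥0 → ℝ → X} {h : ℝ → X}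

theorem busemann_map_add_le_of_mapClusterPt (hα : Isometry α)
    (hF : ∀ᶠ t in atTop, IsLineThrough (F t) b (α t))
    (hh : MapClusterPt h atTop F) (s : ℝ) : busemann α (h s) + s ≤ busemann α b := by
  refine le_busemann fun t₀ => ?_
  have hclosed : IsClosed {g : ℝ → X | busemann α (g s) + s ≤ dist b (α t₀) - t₀} :=
    isClosed_le (((lipschitzWith_busemann hα).continuous.comp (continuous_apply s)).add_const s)
      continuous_const
  refine hclosed.mem_of_mapClusterPt hh ?_
  filter_upwards [hF, eventually_ge_atTop t₀, (tendsto_dist_atTop hα b).eventually_ge_atTop s]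
    with t ⟨hFt, hFt0, hFtα⟩ ht hst
  have hdist : dist (F t s) (α t) = dist b (α t) - s := by
    nth_rewrite 1 [← hFtα]
    rw [hFt.dist_eq, Real.dist_eq, abs_of_nonpos (by linarith), neg_sub]
  have := busemann_le hα (F t s) t
  have := antitone_dist_sub hα b ht
  linarith

theorem busemann_add_le_busemann_map_neg_of_mapClusterPt (hα : Isometry α)
    (hF : ∀ᶠ t in atTop, IsLineThrough (F t) b (α t))
    (hh : MapClusterPt h atTop F) {u : ℝ} (hu : 0 ≤ u) :
    busemann α b + u ≤ busemann α (h (-u)) := by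
  refine le_busemann fun τ => ?_
  have hclosed : IsClosed {g : ℝ → X | busemann α b + u ≤ dist (g (-u)) (α τ) - τ} :=
    isClosed_le continuous_const (by fun_prop)
  refine hclosed.mem_of_mapClusterPt hh ?_
  filter_upwards [hF, eventually_ge_atTop τ] with t ⟨hFt, hFt0, hFtα⟩ ht
  have hdist : dist (F t (-u)) (α t) = u + dist b (α t) := by
    nth_rewrite 1 [← hFtα]
    rw [hFt.dist_eq, Real.dist_eq, abs_of_nonpos (by linarith [dist_nonneg (x := b) (y := α t)])]
    ring
  have := busemann_le hα b t
  have := antitone_dist_sub hα (F t (-u)) ht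
  linarith

theorem isBusemannLine_of_mapClusterPt (hα : Isometry α)
    (hF : ∀ᶠ t in atTop, IsLineThrough (F t) b (α t))
    (hh : MapClusterPt h atTop F) : IsBusemannLine α b h := by
  have hiso : Isometry h := by
    have hclosed : IsClosed {g : ℝ → X | ∀ s s', dist (g s) (g s') = dist s s'} := by
      simp only [ofPred_forall]
      exact isClosed_iInter fun s => isClosed_iInter fun s' =>
        isClosed_eq (by fun_prop) continuous_const
    exact Isometry.of_dist_eq <| hclosed.mem_of_mapClusterPt hh <|
      hF.mono fun t ht => ht.1.dist_eq
  have h0 : h 0 = b :=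
    (isClosed_eq (continuous_apply 0) continuous_const).mem_of_mapClusterPt hh
      (hF.mono fun t ht => ht.2.1)
  refine ⟨hiso, h0, fun s => le_antisymm ?_ ?_⟩
  · linarith [busemann_map_add_le_of_mapClusterPt hα hF hh s]
  rcases le_or_gt 0 s with hs | hs
  · have hbs : dist b (h s) = s := by
      rw [← h0, hiso.dist_eq, Real.dist_eq, zero_sub, abs_neg, abs_of_nonneg hs]
    linarith [busemann_le_add_dist hα b (h s)]
  · simpa [sub_eq_add_neg] using
      busemann_add_le_busemann_map_neg_of_mapClusterPt hα hF hh (neg_nonneg.2 hs.le)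

theorem exists_tendsto_isBusemannLine [ProperSpace X] (hS : Straight X) (hα : Isometry α)
    (hF : ∀ᶠ t in atTop, IsLineThrough (F t) b (α t)) :
    ∃ g, IsBusemannLine α b g ∧ Tendsto F atTop (𝓝 g) := by
  set K : Set (ℝ → X) := univ.pi fun s => Metric.closedBall b |s|
  have hK : IsCompact K := isCompact_univ_pi fun s => isCompact_closedBall b _
  have hFK : ∀ᶠ t in atTop, F t ∈ K := hF.mono fun t ⟨hFt, hFt0, _⟩ s _ => by
    rw [Metric.mem_closedBall, ← hFt0, hFt.dist_eq, Real.dist_eq, sub_zero]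
  obtain ⟨g, -, hg⟩ := hK.exists_mapClusterPt (tendsto_principal.2 hFK)
  have hgB := isBusemannLine_of_mapClusterPt hα hF hg
  exact ⟨g, hgB, hK.tendsto_nhds_of_unique_mapClusterPt hFK fun h _ hh =>
    (isBusemannLine_of_mapClusterPt hα hF hh).eq hS hα hgB⟩

end ClusterPoints

end Busemann

/-- Every geodesic ray `α` (not necessarily based at `b`) converges in the visual
compactification `X̄_b`: `d(b, α t) → ∞` and the geodesic rays based at `b` passing through
`α t` converge in `D_b` as `t → ∞`. -/
theorem statement9 [ProperSpace X] (hU : UniquelyGeodesic X) (hS : Straight X) (b : X)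
    (α : ℝ≥0 → X) (hα : Isometry α) :
    Tendsto (fun t : ℝ≥0 => dist b (α t)) atTop atTop ∧
    ∃ γlim : GeodesicRay X b, ∀ γfam : ℝ≥0 → GeodesicRay X b,
      (∀ t : ℝ≥0, α t ∈ Set.range ⇑(γfam t).1) → Tendsto γfam atTop (𝓝 γlim) := by
  have hdist := tendsto_dist_atTop hα b
  have hne : ∀ᶠ t in atTop, α t ≠ b :=
    (hdist.eventually_gt_atTop 0).mono fun t ht => (dist_pos.1 ht).symm
  have hline : ∀ t, ∃ g : ℝ → X, α t ≠ b → IsLineThrough g b (α t) := fun t => by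
    by_cases hαt : α t = b
    · exact ⟨fun _ => b, fun h => absurd hαt h⟩
    · exact (hS.exists_isLineThrough hU (Ne.symm hαt)).imp fun _ hg _ => hg
  choose F hF using hline
  obtain ⟨g, ⟨hg, hg0, -⟩, hFg⟩ := exists_tendsto_isBusemannLine hS hα (hne.mono hF)
  have hray : Isometry fun s : ℝ≥0 => g s := hg.comp NNReal.isometry_coe
  refine ⟨hdist, ⟨⟨fun s => g s, hray.continuous⟩, hray, hg0⟩, fun γ hγ => ?_⟩
  rw [tendsto_subtype_rng]
  refine Equicontinuous.tendsto_continuousMap_of_tendsto_pi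
    (LipschitzWith.uniformEquicontinuous _ 1 fun t => (γ t).2.1.lipschitz).equicontinuous ?_
  have hγF : ∀ᶠ t in atTop, ⇑(γ t).1 = fun s : ℝ≥0 => F t s := hne.mono fun t ht =>
    funext (hS.ray_eq_line_of_mem_range hU ht (γ t).2.1 (γ t).2.2 (hγ t) (hF t ht))
  exact (tendsto_pi_nhds.2 fun s : ℝ≥0 => tendsto_pi_nhds.1 hFg s).congr'
    (EventuallyEq.symm hγF)
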